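/- (LP reformulation of generalized robustness) For a no-signaling behavior P, 1 + R_G(P) = (1/4) · min { uᵀ P' : P' ∈ Cone(L), P' − P ≥ 0 componentwise }, where u is the all-ones vector in R^(4 m_A m_B). -/

import Mathlib

/-!
Write `P' = P + r • Q`. Then `(P + r • Q) / (1 + r)` is local exactly when `P'` lies in the cone
over the local polytope, and since each of the four settings of `P'` carries mass `1 + r`, its
total mass is `4 (1 + r)`. Conversely `P' - P` is a nonnegative no-signaling vector whose settings
all carry the same mass `r`, hence it is `r` times a no-signaling behavior. So the values of the
linear program are the image of the feasible set of `R_G` under the increasing continuous map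
`r ↦ 4 (1 + r)`, which commutes with the infimum. That feasible set is nonempty: mixing enough of
the uniform behavior, which is local and strictly positive, into `P` makes it local.
-/

open Finset

def IsLocal {A B : Type*} [Fintype A] [Fintype B] [DecidableEq A] [DecidableEq B]
    (p : Fin 2 → Fin 2 → A → B → ℝ) : Prop :=
  ∃ l : (Fin 2 → A) → (Fin 2 → B) → ℝ,
    (∀ f g, 0 ≤ l f g) ∧ (∑ f, ∑ g, l f g) = 1 ∧
    ∀ x y a b, p x y a b = ∑ f, ∑ g, if f x = a ∧ g y = b then l f g else 0

def NoSignaling {A B : Type*} [Fintype A] [Fintype B]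
    (p : Fin 2 → Fin 2 → A → B → ℝ) : Prop :=
  (∀ (x : Fin 2) (a : A) (y y' : Fin 2), ∑ b, p x y a b = ∑ b, p x y' a b) ∧
  (∀ (y : Fin 2) (b : B) (x x' : Fin 2), ∑ a, p x y a b = ∑ a, p x' y a b)

def IsBehavior {A B : Type*} [Fintype A] [Fintype B]
    (p : Fin 2 → Fin 2 → A → B → ℝ) : Prop :=
  (∀ x y a b, 0 ≤ p x y a b) ∧ ∀ x y, ∑ a, ∑ b, p x y a b = 1

/-- Membership in the cone generated by the local polytope. -/
def InConeL {A B : Type*} [Fintype A] [Fintype B] [DecidableEq A] [DecidableEq B]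
    (P' : Fin 2 → Fin 2 → A → B → ℝ) : Prop :=
  ∃ (r : ℝ) (Q : Fin 2 → Fin 2 → A → B → ℝ), 0 ≤ r ∧ IsLocal Q ∧
    P' = fun x y a b => r * Q x y a b

/-- Generalized robustness. -/
noncomputable def RG {A B : Type*} [Fintype A] [Fintype B] [DecidableEq A] [DecidableEq B]
    (P : Fin 2 → Fin 2 → A → B → ℝ) : ℝ :=
  sInf {r : ℝ | 0 ≤ r ∧ ∃ Q : Fin 2 → Fin 2 → A → B → ℝ,
    IsBehavior Q ∧ NoSignaling Q ∧
    IsLocal (fun x y a b => (1 + r)⁻¹ * (P x y a b + r * Q x y a b))}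

section Behaviors

variable {A B : Type*} [Fintype A] [Fintype B]

lemma le_sum_sum_of_nonneg {α β : Type*} [Fintype α] [Fintype β] {f : α → β → ℝ}
    (hf : ∀ a b, 0 ≤ f a b) (a : α) (b : β) : f a b ≤ ∑ a, ∑ b, f a b :=
  (single_le_sum (fun p _ => hf p.1 p.2) (mem_univ (a, b))).trans_eq
    (Fintype.sum_prod_type' f)

lemma sum_eq_four_mul_of_forall_sum_eq {p : Fin 2 → Fin 2 → A → B → ℝ} {c : ℝ}
    (hp : ∀ x y, ∑ a, ∑ b, p x y a b = c) : ∑ x, ∑ y, ∑ a, ∑ b, p x y a b = 4 * c := by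
  simp only [hp, Fin.sum_univ_two]
  ring

lemma IsBehavior.le_one {p : Fin 2 → Fin 2 → A → B → ℝ} (hp : IsBehavior p)
    (x y : Fin 2) (a : A) (b : B) : p x y a b ≤ 1 :=
  (le_sum_sum_of_nonneg (hp.1 x y) a b).trans_eq (hp.2 x y)

lemma IsBehavior.nonempty_left {p : Fin 2 → Fin 2 → A → B → ℝ} (hp : IsBehavior p) :
    Nonempty A := by
  by_contra h
  rw [not_nonempty_iff] at h
  simpa using hp.2 0 0

lemma IsBehavior.nonempty_right {p : Fin 2 → Fin 2 → A → B → ℝ} (hp : IsBehavior p) :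
    Nonempty B := by
  by_contra h
  rw [not_nonempty_iff] at h
  simpa using hp.2 0 0

lemma NoSignaling.add {p q : Fin 2 → Fin 2 → A → B → ℝ} (hp : NoSignaling p)
    (hq : NoSignaling q) : NoSignaling (p + q) :=
  ⟨fun x a y y' => by simp only [Pi.add_apply, sum_add_distrib, hp.1 x a y y', hq.1 x a y y'],
    fun y b x x' => by simp only [Pi.add_apply, sum_add_distrib, hp.2 y b x x', hq.2 y b x x']⟩

lemma NoSignaling.smul {p : Fin 2 → Fin 2 → A → B → ℝ} (hp : NoSignaling p) (c : ℝ) :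
    NoSignaling (c • p) :=
  ⟨fun x a y y' => by simp only [Pi.smul_apply, ← smul_sum, hp.1 x a y y'],
    fun y b x x' => by simp only [Pi.smul_apply, ← smul_sum, hp.2 y b x x']⟩

lemma NoSignaling.sub {p q : Fin 2 → Fin 2 → A → B → ℝ} (hp : NoSignaling p)
    (hq : NoSignaling q) : NoSignaling (p - q) := by
  simpa [sub_eq_add_neg] using hp.add (hq.smul (-1))

lemma NoSignaling.exists_smul_behavior {D Q₀ : Fin 2 → Fin 2 → A → B → ℝ} {c : ℝ}
    (hD : NoSignaling D) (hD0 : ∀ x y a b, 0 ≤ D x y a b)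
    (hDc : ∀ x y, ∑ a, ∑ b, D x y a b = c) (hQ₀ : IsBehavior Q₀) (hQ₀ns : NoSignaling Q₀) :
    ∃ Q, IsBehavior Q ∧ NoSignaling Q ∧ D = c • Q := by
  rcases eq_or_ne c 0 with rfl | hc
  · refine ⟨Q₀, hQ₀, hQ₀ns, ?_⟩
    ext x y a b
    have := le_sum_sum_of_nonneg (hD0 x y) a b
    simp only [hDc, Pi.smul_apply, zero_smul] at this ⊢
    exact le_antisymm this (hD0 x y a b)
  · have hc0 : 0 ≤ c := hDc 0 0 ▸ sum_nonneg fun a _ => sum_nonneg fun b _ => hD0 0 0 a b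
    refine ⟨c⁻¹ • D, ⟨fun x y a b => mul_nonneg (inv_nonneg.2 hc0) (hD0 x y a b),
      fun x y => ?_⟩, hD.smul _, by rw [smul_smul, mul_inv_cancel₀ hc, one_smul]⟩
    simp only [Pi.smul_apply, smul_eq_mul, ← mul_sum, hDc, inv_mul_cancel₀ hc]

end Behaviors

section Local

variable {A B : Type*} [Fintype A] [Fintype B] [DecidableEq A] [DecidableEq B]

lemma sum_right_deterministic (l : (Fin 2 → A) → (Fin 2 → B) → ℝ) (x y : Fin 2) (a : A) :
    ∑ b, ∑ f, ∑ g, (if f x = a ∧ g y = b then l f g else 0) =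
      ∑ f, ∑ g, if f x = a then l f g else 0 := by
  rw [sum_comm]
  refine sum_congr rfl fun f _ => ?_
  rw [sum_comm]
  refine sum_congr rfl fun g _ => ?_
  by_cases h : f x = a <;> simp [h]

lemma sum_left_deterministic (l : (Fin 2 → A) → (Fin 2 → B) → ℝ) (x y : Fin 2) (b : B) :
    ∑ a, ∑ f, ∑ g, (if f x = a ∧ g y = b then l f g else 0) =
      ∑ f, ∑ g, if g y = b then l f g else 0 := by
  rw [sum_comm]
  refine sum_congr rfl fun f _ => ?_
  rw [sum_comm]
  refine sum_congr rfl fun g _ => ?_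
  by_cases h : g y = b <;> simp [h]

lemma IsLocal.noSignaling {p : Fin 2 → Fin 2 → A → B → ℝ} (hp : IsLocal p) : NoSignaling p := by
  obtain ⟨l, -, -, hlp⟩ := hp
  refine ⟨fun x a y y' => ?_, fun y b x x' => ?_⟩
  · simp only [hlp, sum_right_deterministic]
  · simp only [hlp, sum_left_deterministic]

lemma IsLocal.isBehavior {p : Fin 2 → Fin 2 → A → B → ℝ} (hp : IsLocal p) : IsBehavior p := by
  obtain ⟨l, hl0, hl1, hlp⟩ := hp
  refine ⟨fun x y a b => ?_, fun x y => ?_⟩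
  · rw [hlp]
    exact sum_nonneg fun f _ => sum_nonneg fun g _ => by split_ifs <;> simp [hl0]
  · simp only [hlp, sum_right_deterministic]
    rw [sum_comm, ← hl1]
    refine sum_congr rfl fun f _ => ?_
    rw [sum_comm]
    simp

lemma sum_ite_apply_eq {ι α : Type*} [Fintype ι] [DecidableEq ι] [Fintype α] [DecidableEq α]
    (i : ι) (a : α) (w : ℝ) :
    ∑ f : ι → α, (if f i = a then w else 0) = Fintype.card α ^ (Fintype.card ι - 1) * w := by
  rw [sum_ite, sum_const_zero, add_zero, sum_const, nsmul_eq_mul, ← Fintype.piFinset_univ,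
    Fintype.card_filter_piFinset_const_eq_of_mem _ _ (mem_univ a), card_univ]
  push_cast
  ring

variable (A B) in
noncomputable def uniformBehavior : Fin 2 → Fin 2 → A → B → ℝ :=
  fun _ _ _ _ => ((Fintype.card A : ℝ) * Fintype.card B)⁻¹

lemma isLocal_uniformBehavior [Nonempty A] [Nonempty B] : IsLocal (uniformBehavior A B) := by
  have hA : (Fintype.card A : ℝ) ≠ 0 := Nat.cast_ne_zero.2 Fintype.card_ne_zero
  have hB : (Fintype.card B : ℝ) ≠ 0 := Nat.cast_ne_zero.2 Fintype.card_ne_zero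
  refine ⟨fun _ _ => ((Fintype.card A : ℝ) * Fintype.card B)⁻¹ ^ 2, fun _ _ => by positivity,
    ?_, fun x y a b => ?_⟩
  · simp only [sum_const, card_univ, Fintype.card_fun, Fintype.card_fin, nsmul_eq_mul]
    push_cast
    field_simp
  · simp only [uniformBehavior, ite_and, sum_ite_irrel, sum_const_zero, sum_ite_apply_eq,
      Fintype.card_fin]
    field_simp
    ring

end Local

section Robustness

variable {A B : Type*} [Fintype A] [Fintype B] [DecidableEq A] [DecidableEq B]

def robustnessFeasible (P : Fin 2 → Fin 2 → A → B → ℝ) : Set ℝ :=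
  {r : ℝ | 0 ≤ r ∧ ∃ Q : Fin 2 → Fin 2 → A → B → ℝ,
    IsBehavior Q ∧ NoSignaling Q ∧
    IsLocal (fun x y a b => (1 + r)⁻¹ * (P x y a b + r * Q x y a b))}

def coneLPValues (P : Fin 2 → Fin 2 → A → B → ℝ) : Set ℝ :=
  {s : ℝ | ∃ P' : Fin 2 → Fin 2 → A → B → ℝ,
    InConeL P' ∧ (∀ x y a b, P x y a b ≤ P' x y a b) ∧
    s = ∑ x, ∑ y, ∑ a, ∑ b, P' x y a b}

/-- Mixing `P` with weight `1 : ε⁻¹` against `Q := (1 + ε) • U - ε • P` gives back `U`; the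
lower bound `ε ≤ U` is what makes `Q` nonnegative. -/
lemma inv_mem_robustnessFeasible {P U : Fin 2 → Fin 2 → A → B → ℝ} {ε : ℝ}
    (hP : IsBehavior P) (hNS : NoSignaling P) (hU : IsLocal U) (hε : 0 < ε)
    (hεU : ∀ x y a b, ε ≤ U x y a b) : ε⁻¹ ∈ robustnessFeasible P := by
  have hUb := hU.isBehavior
  refine ⟨inv_nonneg.2 hε.le, (1 + ε) • U - ε • P, ⟨fun x y a b => ?_, fun x y => ?_⟩,
    hU.noSignaling.smul _ |>.sub (hNS.smul _), ?_⟩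
  · have := hP.le_one x y a b
    simp only [Pi.sub_apply, Pi.smul_apply, smul_eq_mul, sub_nonneg]
    nlinarith [hεU x y a b, hP.1 x y a b]
  · simp only [Pi.sub_apply, Pi.smul_apply, smul_eq_mul, sum_sub_distrib, ← mul_sum, hUb.2,
      hP.2]
    ring
  · convert hU using 1
    ext x y a b
    simp only [Pi.sub_apply, Pi.smul_apply, smul_eq_mul]
    field_simp
    ring

lemma robustnessFeasible_nonempty [Nonempty A] [Nonempty B] {P : Fin 2 → Fin 2 → A → B → ℝ}
    (hP : IsBehavior P) (hNS : NoSignaling P) : (robustnessFeasible P).Nonempty :=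
  ⟨_, inv_mem_robustnessFeasible hP hNS isLocal_uniformBehavior
    (inv_pos.2 (mul_pos (Nat.cast_pos.2 Fintype.card_pos) (Nat.cast_pos.2 Fintype.card_pos)))
    fun _ _ _ _ => le_rfl⟩

lemma mem_coneLPValues_of_mem_robustnessFeasible {P : Fin 2 → Fin 2 → A → B → ℝ} {r : ℝ}
    (hP : IsBehavior P) (hr : r ∈ robustnessFeasible P) : 4 * (1 + r) ∈ coneLPValues P := by
  obtain ⟨hr0, Q, hQ, -, hL⟩ := hr
  have hr1 : 1 + r ≠ 0 := by positivity
  refine ⟨fun x y a b => P x y a b + r * Q x y a b, ⟨1 + r, _, by positivity, hL, ?_⟩,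
    fun x y a b => le_add_of_nonneg_right (mul_nonneg hr0 (hQ.1 x y a b)), ?_⟩
  · ext x y a b
    field_simp
  · rw [sum_eq_four_mul_of_forall_sum_eq fun x y => ?_]
    simp only [sum_add_distrib, ← mul_sum, hP.2, hQ.2, mul_one]

lemma exists_mem_robustnessFeasible_of_mem_coneLPValues {P : Fin 2 → Fin 2 → A → B → ℝ} {s : ℝ}
    (hP : IsBehavior P) (hNS : NoSignaling P) (hs : s ∈ coneLPValues P) :
    ∃ r ∈ robustnessFeasible P, 4 * (1 + r) = s := by
  obtain ⟨_, ⟨t, Q', -, hQ', rfl⟩, hle, rfl⟩ := hs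
  have hmass : ∀ x y, ∑ a, ∑ b, t * Q' x y a b = t := fun x y => by
    simp only [← mul_sum, hQ'.isBehavior.2, mul_one]
  have hDmass : ∀ x y, ∑ a, ∑ b, (t • Q' - P) x y a b = t - 1 := fun x y => by
    simp only [Pi.sub_apply, Pi.smul_apply, smul_eq_mul, sum_sub_distrib, hmass, hP.2]
  have hD0 : ∀ x y a b, 0 ≤ (t • Q' - P) x y a b := fun x y a b => sub_nonneg.2 (hle x y a b)
  obtain ⟨Q, hQ, hQns, hDQ⟩ :=
    (hQ'.noSignaling.smul t).sub hNS |>.exists_smul_behavior hD0 hDmass hP hNS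
  have ht : 1 ≤ t := sub_nonneg.1 <| hDmass 0 0 ▸
    sum_nonneg fun a _ => sum_nonneg fun b _ => hD0 0 0 a b
  refine ⟨t - 1, ⟨sub_nonneg.2 ht, Q, hQ, hQns, ?_⟩, ?_⟩
  · convert hQ' using 1
    ext x y a b
    have := congrFun (congrFun (congrFun (congrFun hDQ x) y) a) b
    simp only [Pi.sub_apply, Pi.smul_apply, smul_eq_mul] at this
    rw [← this, add_sub_cancel, add_sub_cancel, ← mul_assoc,
      inv_mul_cancel₀ (by positivity), one_mul]
  · rw [sum_eq_four_mul_of_forall_sum_eq hmass]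
    ring

lemma coneLPValues_eq_image {P : Fin 2 → Fin 2 → A → B → ℝ} (hP : IsBehavior P)
    (hNS : NoSignaling P) :
    coneLPValues P = (fun r => 4 * (1 + r)) '' robustnessFeasible P :=
  Set.Subset.antisymm (fun _ hs => exists_mem_robustnessFeasible_of_mem_coneLPValues hP hNS hs)
    (Set.image_subset_iff.2 fun _ hr => mem_coneLPValues_of_mem_robustnessFeasible hP hr)

end Robustness

theorem RG_linear_program_general {A B : Type*} [Fintype A] [Fintype B]
    [DecidableEq A] [DecidableEq B]
    (P : Fin 2 → Fin 2 → A → B → ℝ) (hP : IsBehavior P) (hNS : NoSignaling P) :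
    1 + RG P = (1 / 4) * sInf {s : ℝ | ∃ P' : Fin 2 → Fin 2 → A → B → ℝ,
      InConeL P' ∧ (∀ x y a b, P x y a b ≤ P' x y a b) ∧
      s = ∑ x, ∑ y, ∑ a, ∑ b, P' x y a b} := by
  have := hP.nonempty_left
  have := hP.nonempty_right
  have hmono : Monotone fun r : ℝ => 4 * (1 + r) := fun _ _ h => by dsimp only; linarith
  change 1 + sInf (robustnessFeasible P) = 1 / 4 * sInf (coneLPValues P)
  rw [coneLPValues_eq_image hP hNS, ← hmono.map_csInf_of_continuousAt (by fun_prop)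
    (robustnessFeasible_nonempty hP hNS) ⟨0, fun _ hr => hr.1⟩]
  ring

/-- LP reformulation of the generalized robustness,
`1 + R_G(P) = (1/4)·min { uᵀP' : P' ∈ Cone(L), P' − P ≥ 0 }`. -/
theorem RG_linear_program {A B : Type*} [Fintype A] [Fintype B]
    [DecidableEq A] [DecidableEq B] [Nonempty A] [Nonempty B]
    (P : Fin 2 → Fin 2 → A → B → ℝ) (hP : IsBehavior P) (hNS : NoSignaling P) :
    1 + RG P = (1 / 4) * sInf {s : ℝ | ∃ P' : Fin 2 → Fin 2 → A → B → ℝ,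
      InConeL P' ∧ (∀ x y a b, P x y a b ≤ P' x y a b) ∧
      s = ∑ x, ∑ y, ∑ a, ∑ b, P' x y a b} :=
  RG_linear_program_general P hP hNS
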